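/- Let p > 1, let ψ : [0, θ₀] → ℝ be C¹ with ψ' = −1 − cos²ψ · F_p(ψ), and define ρ(θ) = ρ(0) · exp( −∫₀^θ cos(ψ(τ)) sin(ψ(τ)) F_p(ψ(τ)) dτ ) with ρ(0) > 0. If ψ(0) = π and ψ(θ̄) = −(2j−1)π for some θ̄ ∈ (0, θ₀] and integer j ≥ 1, then ρ(θ̄) = ρ(0). -/

import Mathlib

open Real

noncomputable def Fp (p ψ : ℝ) : ℝ :=
  ((8 * p - 4) * cos ψ ^ 2 + (5 * p - 7) * sin ψ ^ 2) /
    (4 * cos ψ ^ 2 + (p - 1) * sin ψ ^ 2)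

/-!
Since `ψ' = -(1 + cos²ψ · F_p(ψ))` and `1 + cos²σ · F_p(σ) > 0`, the substitution `σ = ψ(τ)` turns
the exponent of `ρ` into the integral of `cos σ sin σ F_p(σ) / (1 + cos²σ F_p(σ))` from `-(2j-1)π`
to `π`. That integrand is odd and `π`-periodic, and the interval has length `2jπ`, so the integral
vanishes.
-/

theorem intervalIntegral_neg_self_eq_zero_of_odd {f : ℝ → ℝ} (hodd : ∀ x, f (-x) = -f x)
    (c : ℝ) : ∫ x in -c..c, f x = 0 := by
  have h := intervalIntegral.integral_comp_neg (a := -c) (b := c) f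
  simp only [hodd, intervalIntegral.integral_neg, neg_neg] at h
  linarith

theorem Function.Periodic.intervalIntegral_add_zsmul_eq_zero_of_odd {f : ℝ → ℝ} {T : ℝ}
    (hf : Function.Periodic f T) (hodd : ∀ x, f (-x) = -f x)
    (hint : ∀ a b, IntervalIntegrable f MeasureTheory.volume a b) (n : ℤ) (t : ℝ) :
    ∫ x in t..t + n • T, f x = 0 := by
  have hperiod : ∫ x in t..t + T, f x = 0 := by
    rw [hf.intervalIntegral_add_eq t (-(T / 2)), show -(T / 2) + T = T / 2 by ring]
    exact intervalIntegral_neg_self_eq_zero_of_odd hodd _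
  rw [hf.intervalIntegral_add_zsmul_eq n t hint, hperiod, smul_zero]

theorem Fp_neg (p σ : ℝ) : Fp p (-σ) = Fp p σ := by
  simp only [Fp, cos_neg, sin_neg, neg_sq]

theorem Fp_periodic (p : ℝ) : Function.Periodic (Fp p) π := fun σ => by
  simp only [Fp, cos_add_pi, sin_add_pi, neg_sq]

noncomputable def FpSubst (p σ : ℝ) : ℝ :=
  cos σ * sin σ * Fp p σ / (1 + cos σ ^ 2 * Fp p σ)

theorem FpSubst_neg (p σ : ℝ) : FpSubst p (-σ) = -FpSubst p σ := by
  simp only [FpSubst, Fp_neg, cos_neg, sin_neg]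
  ring

theorem FpSubst_periodic (p : ℝ) : Function.Periodic (FpSubst p) π := fun σ => by
  simp only [FpSubst, Fp_periodic p σ, cos_add_pi, sin_add_pi]
  ring

section OneLtP

variable {p : ℝ}

theorem Fp_denom_pos (hp : 1 < p) (σ : ℝ) : 0 < 4 * cos σ ^ 2 + (p - 1) * sin σ ^ 2 := by
  rcases le_total p 5 with h | h
  · nlinarith [sin_sq_add_cos_sq σ, mul_nonneg (sub_nonneg.2 h) (sq_nonneg (cos σ))]
  · nlinarith [sin_sq_add_cos_sq σ, mul_nonneg (sub_nonneg.2 h) (sq_nonneg (sin σ))]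

theorem continuous_Fp (hp : 1 < p) : Continuous (Fp p) :=
  Continuous.div (by fun_prop) (by fun_prop) fun σ => (Fp_denom_pos hp σ).ne'

theorem one_add_cos_sq_mul_Fp_pos (hp : 1 < p) (σ : ℝ) : 0 < 1 + cos σ ^ 2 * Fp p σ := by
  have hD := Fp_denom_pos hp σ
  have hnum : 0 < 4 * cos σ ^ 2 + (p - 1) * sin σ ^ 2 +
      cos σ ^ 2 * ((8 * p - 4) * cos σ ^ 2 + (5 * p - 7) * sin σ ^ 2) := by
    rw [show sin σ ^ 2 = 1 - cos σ ^ 2 by linarith [sin_sq_add_cos_sq σ]]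
    nlinarith [sq_nonneg (cos σ), mul_nonneg (by linarith : (0:ℝ) ≤ 4 * p - 2) (sq_nonneg (cos σ)),
      mul_nonneg (by linarith : (0:ℝ) ≤ 3 * p + 3) (pow_nonneg (sq_nonneg (cos σ)) 2)]
  rw [Fp, ← mul_div_assoc, one_add_div hD.ne']
  exact div_pos hnum hD

theorem continuous_FpSubst (hp : 1 < p) : Continuous (FpSubst p) := by
  have := continuous_Fp hp
  exact Continuous.div (by fun_prop) (by fun_prop) fun σ => (one_add_cos_sq_mul_Fp_pos hp σ).ne'

theorem FpSubst_mul (hp : 1 < p) (σ : ℝ) :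
    FpSubst p σ * (-1 - cos σ ^ 2 * Fp p σ) = -(cos σ * sin σ * Fp p σ) := by
  have := (one_add_cos_sq_mul_Fp_pos hp σ).ne'
  rw [FpSubst]
  field_simp
  ring

theorem integral_cos_mul_sin_mul_Fp_comp (hp : 1 < p) {ψ : ℝ → ℝ} {a b : ℝ}
    (hψ : ∀ θ ∈ Set.uIcc a b, HasDerivAt ψ (-1 - cos (ψ θ) ^ 2 * Fp p (ψ θ)) θ) :
    ∫ τ in a..b, cos (ψ τ) * sin (ψ τ) * Fp p (ψ τ) = ∫ σ in ψ b..ψ a, FpSubst p σ := by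
  have hψ' : ContinuousOn (fun θ => -1 - cos (ψ θ) ^ 2 * Fp p (ψ θ)) (Set.uIcc a b) := by
    have := continuous_Fp hp
    exact (show Continuous fun σ => -1 - cos σ ^ 2 * Fp p σ by fun_prop).comp_continuousOn
      fun θ hθ => (hψ θ hθ).continuousAt.continuousWithinAt
  have hsubst := intervalIntegral.integral_comp_mul_deriv hψ hψ' (continuous_FpSubst hp)
  simp only [Function.comp_apply, FpSubst_mul hp, intervalIntegral.integral_neg] at hsubst
  rw [intervalIntegral.integral_symm (ψ a), ← hsubst, neg_neg]

end OneLtP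

theorem stmt_19_general (p : ℝ) (hp : 1 < p) (θ₀ : ℝ)
    (ψ : ℝ → ℝ)
    (hψ : ∀ θ ∈ Set.Icc 0 θ₀,
      HasDerivAt ψ (-1 - cos (ψ θ) ^ 2 * Fp p (ψ θ)) θ)
    (ρ₀ : ℝ)
    (hψ0 : ψ 0 = π)
    (θbar : ℝ) (hθbar : θbar ∈ Set.Ioc 0 θ₀)
    (j : ℕ)
    (hψbar : ψ θbar = -(2 * (j : ℝ) - 1) * π) :
    ρ₀ * Real.exp (-∫ τ in (0 : ℝ)..θbar, cos (ψ τ) * sin (ψ τ) * Fp p (ψ τ)) = ρ₀ := by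
  have hsub : Set.uIcc 0 θbar ⊆ Set.Icc 0 θ₀ := by
    rw [Set.uIcc_of_le hθbar.1.le]
    exact Set.Icc_subset_Icc le_rfl hθbar.2
  have hzero : ∫ σ in -(2 * (j : ℝ) - 1) * π..π, FpSubst p σ = 0 := by
    have := (FpSubst_periodic p).intervalIntegral_add_zsmul_eq_zero_of_odd (FpSubst_neg p)
      (continuous_FpSubst hp).intervalIntegrable (2 * j) (-(2 * (j : ℝ) - 1) * π)
    rwa [show -(2 * (j : ℝ) - 1) * π + (2 * (j : ℤ)) • π = π by push_cast [zsmul_eq_mul]; ring]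
      at this
  rw [integral_cos_mul_sin_mul_Fp_comp hp fun θ hθ => hψ θ (hsub hθ), hψ0, hψbar, hzero,
    neg_zero, exp_zero, mul_one]

theorem stmt_19 (p : ℝ) (hp : 1 < p) (θ₀ : ℝ) (hθ₀ : 0 < θ₀)
    (ψ : ℝ → ℝ)
    (hψ : ∀ θ ∈ Set.Icc 0 θ₀,
      HasDerivAt ψ (-1 - cos (ψ θ) ^ 2 * Fp p (ψ θ)) θ)
    (ρ₀ : ℝ) (hρ₀ : 0 < ρ₀)
    (hψ0 : ψ 0 = π)
    (θbar : ℝ) (hθbar : θbar ∈ Set.Ioc 0 θ₀)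
    (j : ℕ) (hj : 1 ≤ j)
    (hψbar : ψ θbar = -(2 * (j : ℝ) - 1) * π) :
    ρ₀ * Real.exp (-∫ τ in (0 : ℝ)..θbar, cos (ψ τ) * sin (ψ τ) * Fp p (ψ τ)) = ρ₀ :=
  stmt_19_general p hp θ₀ ψ hψ ρ₀ hψ0 θbar hθbar j hψbar
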